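/- arXiv:1510.06730 — 2 statements merged into one kernel-verified Lean document; each statement's English description precedes it below -/
import Mathlib

section
/- Let q : (0,1] × ℝⁿ × ℝⁿ → [0,∞) be jointly measurable. Assume there are constants C₁, C₂, a > 0, α > 0, N ≥ 0 and t₀ ∈ (0,1) such that for all u ∈ (0,t₀] and all x, y ∈ ℝⁿ: (i) q_u(x,y) ≤ C₁ u^{−N}; (ii) q_u(x,y) ≤ C₁ u^{−N} exp(−C₂ |x−y|^{2α}/u) whenever |x−y| ≥ a√u; and (iii) ∫_{ℝⁿ} q_s(x₀,x) dx ≤ 1 for all s ∈ (0,1]. Then for every p > 0 with (n+p)/2 > N + 1 and (n+p)/(2α) > N + 1, there exist constants C > 0 and δ > 0 such that for all s ∈ (0,1] and all u ∈ (0,t₀], ∫_{ℝⁿ} ∫_{ℝⁿ} |x−y|^p q_s(x₀,x) q_u(x,y) dy dx ≤ C u^{1+δ}. -/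
/-!
Fix `x` and split the inner integral at the radius `R = a√u`. On `ball x R` the on-diagonal
bound gives `R ^ p · C₁ u ^ (-N) · vol (ball x R) ≍ u ^ ((n + p) / 2 - N)`. Off the ball,
`exp (-v) ≤ ⌈m⌉₊! v ^ (-m)` turns the sub-Gaussian bound into the power law
`u ^ (m - N) |x - y| ^ (-2αm)`, which a dyadic decomposition into annuli integrates outside
`ball x R` once `2αm > n + p`, giving `u ^ (m - N + (n + p - 2αm) / 2)`; taking `m` slightly above
`(n + p) / (2α)` makes this exponent exceed `1`. The bound on the inner integral is uniform in `x`,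
so integrating it against `q s x₀ ·`, of mass at most `1`, finishes the proof.
-/

open MeasureTheory ENNReal Metric Module Set Filter Topology
open scoped Nat

namespace Real

theorem exp_neg_le_factorial_ceil_mul_rpow_neg {m v : ℝ} (hm : 0 ≤ m) (hv : 0 < v) :
    exp (-v) ≤ ⌈m⌉₊ ! * v ^ (-m) := by
  rw [rpow_neg hv.le, ← div_eq_mul_inv, le_div_iff₀ (by positivity), exp_neg,
    inv_mul_le_iff₀ (exp_pos v)]
  rcases le_or_gt 1 v with hv1 | hv1
  · calc v ^ m ≤ v ^ (⌈m⌉₊ : ℝ) := rpow_le_rpow_of_exponent_le hv1 (Nat.le_ceil m)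
      _ = v ^ ⌈m⌉₊ := rpow_natCast v _
      _ ≤ exp v * ⌈m⌉₊ ! := (div_le_iff₀ (by positivity)).1 (pow_div_factorial_le_exp _ hv.le _)
  · calc v ^ m ≤ 1 := rpow_le_one hv.le hv1.le hm
      _ ≤ exp v * ⌈m⌉₊ ! := one_le_mul_of_one_le_of_one_le (one_le_exp hv.le)
        (mod_cast Nat.one_le_of_lt (Nat.factorial_pos _))

theorem exp_neg_mul_rpow_div_le {C α m u r : ℝ} (hC : 0 < C) (hm : 0 ≤ m) (hu : 0 < u)
    (hr : 0 < r) :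
    exp (-C * r ^ (2 * α) / u) ≤ ⌈m⌉₊ ! * C ^ (-m) * u ^ m * r ^ (-(2 * α * m)) := by
  calc exp (-C * r ^ (2 * α) / u) = exp (-(C * r ^ (2 * α) / u)) := by rw [neg_mul, neg_div]
    _ ≤ ⌈m⌉₊ ! * (C * r ^ (2 * α) / u) ^ (-m) :=
      exp_neg_le_factorial_ceil_mul_rpow_neg hm (by positivity)
    _ = ⌈m⌉₊ ! * C ^ (-m) * u ^ m * r ^ (-(2 * α * m)) := by
      rw [div_rpow (by positivity) hu.le, mul_rpow hC.le (by positivity), ← rpow_mul hr.le,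
        rpow_neg hu.le, div_inv_eq_mul, mul_neg]
      ring

theorem rpow_mul_mul_sqrt_rpow_le {u a x y e : ℝ} (hu : u ∈ Ioc 0 1) (ha : 0 ≤ a)
    (he : e ≤ x + y / 2) : u ^ x * (a * √u) ^ y ≤ a ^ y * u ^ e := by
  rw [mul_rpow ha (sqrt_nonneg u), sqrt_eq_rpow, ← rpow_mul hu.1.le, mul_left_comm,
    ← rpow_add hu.1]
  exact mul_le_mul_of_nonneg_left (rpow_le_rpow_of_exponent_ge hu.1 hu.2 (by linarith))
    (by positivity)

end Real

theorem exists_decay_exponent {d p α N : ℝ} (hα : 0 < α) (hdp : 0 < d + p)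
    (h : N + 1 < (d + p) / (2 * α)) :
    ∃ m, 0 < m ∧ d + p < 2 * α * m ∧ 1 < m - N + (d + p - 2 * α * m) / 2 := by
  set t := (d + p) / (2 * α)
  have ht : 2 * α * t = d + p := mul_div_cancel₀ _ (by positivity)
  have hft : 1 < t - N + (d + p - 2 * α * t) / 2 := by rw [ht]; linarith
  have hcont : Continuous fun m : ℝ => m - N + (d + p - 2 * α * m) / 2 := by fun_prop
  have hnear : ∀ᶠ m in 𝓝[>] t, 1 < m - N + (d + p - 2 * α * m) / 2 :=
    nhdsWithin_le_nhds ((hcont.tendsto t).eventually (lt_mem_nhds hft))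
  obtain ⟨m, hm, htm⟩ := (hnear.and self_mem_nhdsWithin).exists
  refine ⟨m, (div_pos hdp (by positivity)).trans htm, ?_, hm⟩
  rw [← ht]
  exact mul_lt_mul_of_pos_left htm (by positivity)

theorem lintegral_lintegral_mul_le {X Y : Type*} [MeasurableSpace X] [MeasurableSpace Y]
    {μ : Measure X} {ν : Measure Y} {f : X → ℝ≥0∞} {g : X → Y → ℝ≥0∞} {b : ℝ≥0∞}
    (hg : ∀ x, Measurable (g x)) (hf : ∫⁻ x, f x ∂μ ≤ 1) (hgb : ∀ x, ∫⁻ y, g x y ∂ν ≤ b) :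
    ∫⁻ x, ∫⁻ y, f x * g x y ∂ν ∂μ ≤ b := by
  rcases eq_or_ne b ∞ with rfl | hb
  · exact le_top
  calc ∫⁻ x, ∫⁻ y, f x * g x y ∂ν ∂μ = ∫⁻ x, f x * ∫⁻ y, g x y ∂ν ∂μ :=
        lintegral_congr fun x => lintegral_const_mul _ (hg x)
    _ ≤ ∫⁻ x, f x * b ∂μ := lintegral_mono fun x => by gcongr; exact hgb x
    _ = (∫⁻ x, f x ∂μ) * b := lintegral_mul_const' _ _ hb
    _ ≤ 1 * b := by gcongr
    _ = b := one_mul b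

theorem compl_ball_subset_iUnion_ball_diff_ball {X : Type*} [PseudoMetricSpace X] (x : X)
    {R : ℝ} (hR : 0 < R) :
    (ball x R)ᶜ ⊆ ⋃ k : ℕ, ball x (2 ^ (k + 1) * R) \ ball x (2 ^ k * R) := by
  intro y hy
  rw [mem_compl_iff, mem_ball', not_lt] at hy
  obtain ⟨k, hk, hk'⟩ := exists_nat_pow_near ((one_le_div hR).2 hy) one_lt_two
  refine mem_iUnion.2 ⟨k, mem_ball'.2 ((div_lt_iff₀ hR).1 hk'), fun h => ?_⟩
  exact (mem_ball'.1 h).not_ge ((le_div_iff₀ hR).1 hk)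

/-- `2 ^ d ∑ₖ (2 ^ (d - s)) ^ k`, from summing `|x - y| ^ (-s)` over the dyadic annuli
`2ᵏR ≤ |x - y| < 2ᵏ⁺¹R`. -/
noncomputable def dyadicTailConst (d : ℕ) (s : ℝ) : ℝ := 2 ^ d / (1 - 2 ^ (d - s))

theorem dyadicTailConst_nonneg {d : ℕ} {s : ℝ} (hs : d < s) : 0 ≤ dyadicTailConst d s :=
  div_nonneg (by positivity)
    (sub_nonneg.2 (Real.rpow_le_one_of_one_le_of_nonpos one_le_two (by linarith)))

section AddHaar

variable {E : Type*} [NormedAddCommGroup E] [NormedSpace ℝ E] [FiniteDimensional ℝ E]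
  [MeasurableSpace E] [BorelSpace E] (μ : Measure E) [μ.IsAddHaarMeasure]

theorem addHaar_ball_eq_ofReal (x : E) {r : ℝ} (hr : 0 < r) :
    μ (ball x r) = ENNReal.ofReal (r ^ finrank ℝ E * μ.real (ball 0 1)) := by
  rw [Measure.addHaar_ball_of_pos μ x hr, ENNReal.ofReal_mul (by positivity),
    ofReal_measureReal measure_ball_lt_top.ne]

theorem setLIntegral_ball_diff_ball_rpow_neg_le {s R : ℝ} (hs : 0 ≤ s) (hR : 0 < R) (x : E)
    (k : ℕ) :
    ∫⁻ y in ball x (2 ^ (k + 1) * R) \ ball x (2 ^ k * R), ENNReal.ofReal (dist x y ^ (-s)) ∂μ ≤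
      ENNReal.ofReal (2 ^ finrank ℝ E * R ^ (finrank ℝ E - s) * μ.real (ball 0 1) *
        (2 ^ (finrank ℝ E - s)) ^ k) := by
  have hbound : ∀ y ∈ ball x (2 ^ (k + 1) * R) \ ball x (2 ^ k * R),
      ENNReal.ofReal (dist x y ^ (-s)) ≤ ENNReal.ofReal ((2 ^ k * R) ^ (-s)) := by
    rintro y ⟨-, hy⟩
    rw [mem_ball', not_lt] at hy
    exact ENNReal.ofReal_le_ofReal (Real.rpow_le_rpow_of_nonpos (by positivity) hy (by linarith))
  calc _ ≤ ∫⁻ _ in ball x (2 ^ (k + 1) * R) \ ball x (2 ^ k * R),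
        ENNReal.ofReal ((2 ^ k * R) ^ (-s)) ∂μ :=
        setLIntegral_mono' (measurableSet_ball.diff measurableSet_ball) hbound
    _ ≤ ENNReal.ofReal ((2 ^ k * R) ^ (-s)) * μ (ball x (2 ^ (k + 1) * R)) := by
        rw [setLIntegral_const]; gcongr; exact sdiff_subset
    _ = _ := by
        rw [addHaar_ball_eq_ofReal μ x (by positivity), ← ENNReal.ofReal_mul (by positivity),
          Real.rpow_pow_comm zero_le_two, show (finrank ℝ E : ℝ) - s = -s + finrank ℝ E by ring,
          Real.rpow_add_natCast (x := 2 ^ k) (by positivity), Real.rpow_add_natCast hR.ne',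
          Real.mul_rpow (by positivity) hR.le]
        congr 1
        ring

theorem setLIntegral_compl_ball_rpow_neg_le {s R : ℝ} (hs : finrank ℝ E < s) (hR : 0 < R)
    (x : E) :
    ∫⁻ y in (ball x R)ᶜ, ENNReal.ofReal (dist x y ^ (-s)) ∂μ ≤
      ENNReal.ofReal (dyadicTailConst (finrank ℝ E) s * R ^ (finrank ℝ E - s) *
        μ.real (ball 0 1)) := by
  set c : ℝ := 2 ^ finrank ℝ E * R ^ (finrank ℝ E - s) * μ.real (ball 0 1)
  set θ : ℝ := 2 ^ (finrank ℝ E - s)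
  have hθ₀ : 0 ≤ θ := by positivity
  have hθ₁ : θ < 1 := Real.rpow_lt_one_of_one_lt_of_neg one_lt_two (by linarith)
  calc _ ≤ ∫⁻ y in ⋃ k : ℕ, ball x (2 ^ (k + 1) * R) \ ball x (2 ^ k * R),
        ENNReal.ofReal (dist x y ^ (-s)) ∂μ :=
        lintegral_mono_set (compl_ball_subset_iUnion_ball_diff_ball x hR)
    _ ≤ ∑' k : ℕ, ∫⁻ y in ball x (2 ^ (k + 1) * R) \ ball x (2 ^ k * R),
        ENNReal.ofReal (dist x y ^ (-s)) ∂μ := lintegral_iUnion_le _ _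
    _ ≤ ∑' k : ℕ, ENNReal.ofReal (c * θ ^ k) := ENNReal.tsum_le_tsum fun k =>
        setLIntegral_ball_diff_ball_rpow_neg_le μ ((Nat.cast_nonneg _).trans hs.le) hR x k
    _ = ENNReal.ofReal (∑' k : ℕ, c * θ ^ k) := (ENNReal.ofReal_tsum_of_nonneg
        (fun k => by positivity) ((summable_geometric_of_lt_one hθ₀ hθ₁).mul_left c)).symm
    _ = _ := by
        rw [tsum_mul_left, tsum_geometric_of_lt_one hθ₀ hθ₁, dyadicTailConst]
        congr 1
        ring

theorem lintegral_rpow_dist_mul_le {g : E → ℝ≥0∞} {x : E} {p R M L σ : ℝ} (hp : 0 ≤ p)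
    (hR : 0 < R) (hM : 0 ≤ M) (hL : 0 ≤ L) (hσ : finrank ℝ E + p < σ)
    (hnear : ∀ y, g y ≤ ENNReal.ofReal M)
    (hfar : ∀ y, R ≤ dist x y → g y ≤ ENNReal.ofReal (L * dist x y ^ (-σ))) :
    ∫⁻ y, ENNReal.ofReal (dist x y ^ p) * g y ∂μ ≤
      ENNReal.ofReal ((M * R ^ (finrank ℝ E + p) + L * dyadicTailConst (finrank ℝ E) (σ - p) *
        R ^ (finrank ℝ E - (σ - p))) * μ.real (ball 0 1)) := by
  have hT := dyadicTailConst_nonneg (d := finrank ℝ E) (s := σ - p) (by linarith)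
  rw [← lintegral_add_compl _ (measurableSet_ball (x := x) (ε := R)), add_mul,
    ENNReal.ofReal_add (by positivity) (by positivity)]
  gcongr ?_ + ?_
  · calc ∫⁻ y in ball x R, ENNReal.ofReal (dist x y ^ p) * g y ∂μ
        ≤ ∫⁻ _ in ball x R, ENNReal.ofReal (R ^ p * M) ∂μ := by
          refine setLIntegral_mono' measurableSet_ball fun y hy => ?_
          rw [ENNReal.ofReal_mul (by positivity)]
          exact mul_le_mul' (ENNReal.ofReal_le_ofReal
            (Real.rpow_le_rpow dist_nonneg (mem_ball'.1 hy).le hp)) (hnear y)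
      _ = ENNReal.ofReal (M * R ^ (finrank ℝ E + p) * μ.real (ball 0 1)) := by
          rw [setLIntegral_const, addHaar_ball_eq_ofReal μ x hR,
            ← ENNReal.ofReal_mul (by positivity), Real.rpow_add hR, Real.rpow_natCast]
          congr 1
          ring
  · calc ∫⁻ y in (ball x R)ᶜ, ENNReal.ofReal (dist x y ^ p) * g y ∂μ
        ≤ ∫⁻ y in (ball x R)ᶜ, ENNReal.ofReal L * ENNReal.ofReal (dist x y ^ (-(σ - p))) ∂μ := by
          refine setLIntegral_mono' measurableSet_ball.compl fun y hy => ?_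
          have hy : R ≤ dist x y := by simpa only [mem_compl_iff, mem_ball', not_lt] using hy
          have hd : 0 < dist x y := hR.trans_le hy
          calc ENNReal.ofReal (dist x y ^ p) * g y
              ≤ ENNReal.ofReal (dist x y ^ p) * ENNReal.ofReal (L * dist x y ^ (-σ)) := by
                gcongr; exact hfar y hy
            _ = ENNReal.ofReal L * ENNReal.ofReal (dist x y ^ (-(σ - p))) := by
                rw [← ENNReal.ofReal_mul (by positivity), ← ENNReal.ofReal_mul hL, neg_sub,
                  Real.rpow_sub hd, Real.rpow_neg hd.le]
                congr 1
                ring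
      _ = ENNReal.ofReal L * ∫⁻ y in (ball x R)ᶜ, ENNReal.ofReal (dist x y ^ (-(σ - p))) ∂μ :=
          lintegral_const_mul' _ _ ENNReal.ofReal_ne_top
      _ ≤ ENNReal.ofReal L * ENNReal.ofReal (dyadicTailConst (finrank ℝ E) (σ - p) *
            R ^ (finrank ℝ E - (σ - p)) * μ.real (ball 0 1)) := by
          gcongr; exact setLIntegral_compl_ball_rpow_neg_le μ (by linarith) hR x
      _ = _ := by
          rw [← ENNReal.ofReal_mul hL]
          congr 1
          ring

theorem exists_lintegral_rpow_dist_mul_le {k : ℝ → E → E → ℝ≥0∞} {C₁ C₂ a α N m p δ t₀ : ℝ}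
    (hC₁ : 0 ≤ C₁) (hC₂ : 0 < C₂) (ha : 0 < a) (hm : 0 ≤ m) (hp : 0 ≤ p) (ht₀ : t₀ ≤ 1)
    (hσ : finrank ℝ E + p < 2 * α * m) (hδ₁ : 1 + δ ≤ (finrank ℝ E + p) / 2 - N)
    (hδ₂ : 1 + δ ≤ m - N + (finrank ℝ E + p - 2 * α * m) / 2)
    (hondiag : ∀ u ∈ Ioc 0 t₀, ∀ x y, k u x y ≤ ENNReal.ofReal (C₁ * u ^ (-N)))
    (hoffdiag : ∀ u ∈ Ioc 0 t₀, ∀ x y, a * √u ≤ dist x y →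
      k u x y ≤ ENNReal.ofReal (C₁ * u ^ (-N) * Real.exp (-C₂ * dist x y ^ (2 * α) / u))) :
    ∃ C > 0, ∀ u ∈ Ioc 0 t₀, ∀ x, ∫⁻ y, ENNReal.ofReal (dist x y ^ p) * k u x y ∂μ ≤
      ENNReal.ofReal (C * u ^ (1 + δ)) := by
  set d : ℝ := (finrank ℝ E : ℝ)
  set ρ := d - (2 * α * m - p)
  set K := ⌈m⌉₊ ! * C₂ ^ (-m)
  set T := dyadicTailConst (finrank ℝ E) (2 * α * m - p)
  set V := μ.real (ball 0 1)
  have hK : 0 ≤ K := by positivity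
  have hT : 0 ≤ T := dyadicTailConst_nonneg (by linarith)
  refine ⟨(C₁ * a ^ (d + p) + C₁ * K * T * a ^ ρ) * V + 1, by positivity, fun u hu x => ?_⟩
  have hu₀ : 0 < u := hu.1
  have hu₁ : u ∈ Ioc 0 1 := ⟨hu₀, hu.2.trans ht₀⟩
  have hfar : ∀ y, a * √u ≤ dist x y →
      k u x y ≤ ENNReal.ofReal (C₁ * K * u ^ (m - N) * dist x y ^ (-(2 * α * m))) := by
    intro y hy
    refine (hoffdiag u hu x y hy).trans (ENNReal.ofReal_le_ofReal ?_)
    have hd : 0 < dist x y := (mul_pos ha (Real.sqrt_pos.2 hu₀)).trans_le hy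
    calc C₁ * u ^ (-N) * Real.exp (-C₂ * dist x y ^ (2 * α) / u)
        ≤ C₁ * u ^ (-N) * (⌈m⌉₊ ! * C₂ ^ (-m) * u ^ m * dist x y ^ (-(2 * α * m))) := by
          gcongr
          exact Real.exp_neg_mul_rpow_div_le hC₂ hm hu₀ hd
      _ = C₁ * K * u ^ (m - N) * dist x y ^ (-(2 * α * m)) := by
          rw [sub_eq_neg_add, Real.rpow_add hu₀]; ring
  have hnear_pow := Real.rpow_mul_mul_sqrt_rpow_le hu₁ ha.le (x := -N) (y := d + p)
    (e := 1 + δ) (by linarith)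
  have hfar_pow := Real.rpow_mul_mul_sqrt_rpow_le hu₁ ha.le (x := m - N) (y := ρ)
    (e := 1 + δ) (by linarith)
  calc ∫⁻ y, ENNReal.ofReal (dist x y ^ p) * k u x y ∂μ
      ≤ ENNReal.ofReal ((C₁ * u ^ (-N) * (a * √u) ^ (d + p) +
          C₁ * K * u ^ (m - N) * T * (a * √u) ^ ρ) * V) :=
        lintegral_rpow_dist_mul_le μ hp (by positivity) (by positivity) (by positivity) hσ
          (hondiag u hu x) hfar
    _ ≤ ENNReal.ofReal (((C₁ * a ^ (d + p) + C₁ * K * T * a ^ ρ) * V + 1) * u ^ (1 + δ)) := by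
        refine ENNReal.ofReal_le_ofReal ?_
        calc (C₁ * u ^ (-N) * (a * √u) ^ (d + p) + C₁ * K * u ^ (m - N) * T * (a * √u) ^ ρ) * V
            = (C₁ * (u ^ (-N) * (a * √u) ^ (d + p)) +
              C₁ * K * T * (u ^ (m - N) * (a * √u) ^ ρ)) * V := by ring
          _ ≤ (C₁ * (a ^ (d + p) * u ^ (1 + δ)) + C₁ * K * T * (a ^ ρ * u ^ (1 + δ))) * V := by
              gcongr
          _ ≤ _ := by linarith [show 0 ≤ u ^ (1 + δ) by positivity]

end AddHaar

theorem heat_kernel_moment_bound_general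
    (n : ℕ) (x₀ : EuclideanSpace ℝ (Fin n))
    (q : ℝ → EuclideanSpace ℝ (Fin n) → EuclideanSpace ℝ (Fin n) → ℝ≥0∞)
    (hq_meas : Measurable
      fun p : ℝ × EuclideanSpace ℝ (Fin n) × EuclideanSpace ℝ (Fin n) => q p.1 p.2.1 p.2.2)
    (C₁ C₂ a α N t₀ : ℝ)
    (hC₁ : 0 < C₁) (hC₂ : 0 < C₂) (ha : 0 < a) (hα : 0 < α)
    (ht₀ : t₀ ∈ Set.Ioo (0 : ℝ) 1)
    (hondiag : ∀ u ∈ Set.Ioc (0 : ℝ) t₀, ∀ x y, q u x y ≤ ENNReal.ofReal (C₁ * u ^ (-N)))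
    (hoffdiag : ∀ u ∈ Set.Ioc (0 : ℝ) t₀, ∀ x y, a * Real.sqrt u ≤ dist x y →
        q u x y ≤ ENNReal.ofReal (C₁ * u ^ (-N) * Real.exp (-C₂ * dist x y ^ (2 * α) / u)))
    (hmass : ∀ s ∈ Set.Ioc (0 : ℝ) 1, ∫⁻ x, q s x₀ x ≤ 1) :
    ∀ p : ℝ, 0 < p → N + 1 < (n + p) / 2 → N + 1 < (n + p) / (2 * α) →
      ∃ C > (0 : ℝ), ∃ δ > (0 : ℝ), ∀ s ∈ Set.Ioc (0 : ℝ) 1, ∀ u ∈ Set.Ioc (0 : ℝ) t₀,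
        ∫⁻ x, ∫⁻ y, ENNReal.ofReal (dist x y ^ p) * (q s x₀ x * q u x y)
          ≤ ENNReal.ofReal (C * u ^ (1 + δ)) := by
  intro p hp hp₁ hp₂
  obtain ⟨m, hm, hσ, hm₁⟩ := exists_decay_exponent hα (by positivity) hp₂
  obtain ⟨e, he, he₁, he₂⟩ : ∃ e, 1 < e ∧ e ≤ (n + p) / 2 - N ∧
      e ≤ m - N + (n + p - 2 * α * m) / 2 :=
    ⟨_, lt_min (by linarith) hm₁, min_le_left _ _, min_le_right _ _⟩
  have hdim : (finrank ℝ (EuclideanSpace ℝ (Fin n)) : ℝ) = n := by simp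
  obtain ⟨C, hC, hinner⟩ := exists_lintegral_rpow_dist_mul_le volume (δ := e - 1) hC₁.le hC₂ ha
    hm.le hp.le ht₀.2.le (hdim ▸ hσ) (by linarith) (by linarith) hondiag hoffdiag
  refine ⟨C, hC, e - 1, by linarith, fun s hs u hu => ?_⟩
  have hmeas (x) : Measurable fun y => ENNReal.ofReal (dist x y ^ p) * q u x y :=
    ((measurable_const.dist measurable_id).pow_const p).ennreal_ofReal.mul
      (hq_meas.comp (f := fun y => (u, x, y)) (by fun_prop))
  simp_rw [mul_left_comm (ENNReal.ofReal _)]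
  exact lintegral_lintegral_mul_le hmeas (hmass s hs) (hinner u hu)

/-- on `ℝⁿ`, an on-diagonal bound `q_u(x,y) ≤ C₁ u^{−N}`, an off-diagonal
sub-Gaussian bound with exponent `2α` valid for `|x−y| ≥ a√u`, and sub-probability mass
of the kernels, imply the Kolmogorov-type moment bound
`∫∫ |x−y|^p q_s(x₀,x) q_u(x,y) dy dx ≤ C u^{1+δ}` for every `p` with
`(n+p)/2 > N+1` and `(n+p)/(2α) > N+1`. -/
theorem heat_kernel_moment_bound
    (n : ℕ) (x₀ : EuclideanSpace ℝ (Fin n))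
    (q : ℝ → EuclideanSpace ℝ (Fin n) → EuclideanSpace ℝ (Fin n) → ℝ≥0∞)
    (hq_meas : Measurable
      fun p : ℝ × EuclideanSpace ℝ (Fin n) × EuclideanSpace ℝ (Fin n) => q p.1 p.2.1 p.2.2)
    (C₁ C₂ a α N t₀ : ℝ)
    (hC₁ : 0 < C₁) (hC₂ : 0 < C₂) (ha : 0 < a) (hα : 0 < α) (hN : 0 ≤ N)
    (ht₀ : t₀ ∈ Set.Ioo (0 : ℝ) 1)
    (hondiag : ∀ u ∈ Set.Ioc (0 : ℝ) t₀, ∀ x y, q u x y ≤ ENNReal.ofReal (C₁ * u ^ (-N)))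
    (hoffdiag : ∀ u ∈ Set.Ioc (0 : ℝ) t₀, ∀ x y, a * Real.sqrt u ≤ dist x y →
        q u x y ≤ ENNReal.ofReal (C₁ * u ^ (-N) * Real.exp (-C₂ * dist x y ^ (2 * α) / u)))
    (hmass : ∀ s ∈ Set.Ioc (0 : ℝ) 1, ∫⁻ x, q s x₀ x ≤ 1) :
    ∀ p : ℝ, 0 < p → N + 1 < (n + p) / 2 → N + 1 < (n + p) / (2 * α) →
      ∃ C > (0 : ℝ), ∃ δ > (0 : ℝ), ∀ s ∈ Set.Ioc (0 : ℝ) 1, ∀ u ∈ Set.Ioc (0 : ℝ) t₀,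
        ∫⁻ x, ∫⁻ y, ENNReal.ofReal (dist x y ^ p) * (q s x₀ x * q u x y)
          ≤ ENNReal.ofReal (C * u ^ (1 + δ)) :=
  heat_kernel_moment_bound_general n x₀ q hq_meas C₁ C₂ a α N t₀ hC₁ hC₂ ha hα ht₀ hondiag hoffdiag
    hmass
end

section
/- Let (M, 𝔐, μ) be a σ-finite measure space and q : (0,1] × M × M → [0,∞) jointly measurable and satisfying the Chapman–Kolmogorov identity. Fix x₀, y₀ ∈ M with 0 < q₁(x₀,y₀) < ∞, times 0 < t₁ < ⋯ < t_n < 1 with n ≥ 1, and an index 1 ≤ j ≤ n. Then for all x₁, …, x_{j−1}, x_{j+1}, …, x_n ∈ M, ∫_M q^{x₀,y₀}_{t₁,…,t_n}(x₁,…,x_n) dμ(x_j) = q^{x₀,y₀}_{t₁,…,t_{j−1},t_{j+1},…,t_n}(x₁,…,x_{j−1},x_{j+1},…,x_n), where for n = 1 the right-hand side is interpreted as the constant 1. That is, the bridge finite-dimensional densities form a consistent (projective) family. -/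
open MeasureTheory ENNReal

/-- The unnormalized bridge chain density
`q_{t₁}(x₀,x₁) q_{t₂−t₁}(x₁,x₂) ⋯ q_{t_k−t_{k−1}}(x_{k−1},x_k) q_{1−t_k}(x_k,y₀)`,
encoded by prepending time `0` and point `x₀` and appending time `1` and point `y₀`. -/
noncomputable def bridgeChain {M : Type*} (q : ℝ → M → M → ℝ≥0∞) (x₀ y₀ : M)
    {k : ℕ} (t : Fin k → ℝ) (x : Fin k → M) : ℝ≥0∞ :=
  let T : Fin (k + 2) → ℝ := Fin.snoc (Fin.cons 0 t) 1
  let Y : Fin (k + 2) → M := Fin.snoc (Fin.cons x₀ x) y₀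
  ∏ i : Fin (k + 1), q (T i.succ - T i.castSucc) (Y i.castSucc) (Y i.succ)

/-- The bridge finite-dimensional density `q^{x₀,y₀}_{t₁,…,t_k}(x₁,…,x_k)`. For `k = 0`
(no intermediate times) it equals `q₁(x₀,y₀)⁻¹ q₁(x₀,y₀)`, i.e. the constant `1` whenever
`0 < q₁(x₀,y₀) < ∞`. -/
noncomputable def bridgeFDD {M : Type*} (q : ℝ → M → M → ℝ≥0∞) (x₀ y₀ : M)
    {k : ℕ} (t : Fin k → ℝ) (x : Fin k → M) : ℝ≥0∞ :=
  (q 1 x₀ y₀)⁻¹ * bridgeChain q x₀ y₀ t x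


/-!
The unnormalised bridge density is a product of transition densities along the chain
`(0, x₀), (t₁, x₁), …, (t_n, x_n), (1, y₀)`. Only the two consecutive factors adjacent to
`(t_j, x_j)` depend on `x_j`, so integrating `x_j` out is a single application of the
Chapman–Kolmogorov identity, which merges them into the transition density from `t_{j-1}` to
`t_{j+1}`; the normalising constant `q₁(x₀, y₀)⁻¹` passes through the integral.
-/

namespace Fin

theorem succ_succAbove_of_ne {n : ℕ} {i j : Fin (n + 1)} (h : j ≠ i) :
    i.succ.succAbove j = i.castSucc.succAbove j := by
  rcases h.lt_or_gt with h | h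
  · rw [succAbove_succ_of_le _ _ h.le, succAbove_castSucc_of_lt _ _ h]
  · rw [succAbove_succ_of_lt _ _ h, succAbove_castSucc_of_le _ _ h.le]

theorem insertNth_castSucc_snoc {n : ℕ} {α : Type*} (i : Fin (n + 1)) (x a : α)
    (p : Fin n → α) :
    (insertNth i.castSucc x (snoc p a) : Fin (n + 2) → α) = snoc (insertNth i x p) a := by
  ext j
  cases j using Fin.succAboveCases i.castSucc with
  | x => simp
  | p j =>
    simp only [insertNth_apply_succAbove]
    cases j using Fin.lastCases with
    | last => simp [succAbove_of_le_castSucc _ _ (castSucc_le_castSucc_iff.2 (le_last i))]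
    | cast j => simp

/-- Inserting a node at `l.castSucc.succ`, between `l` and `l + 1`: the consecutive pairs of the
longer chain are the two pairs through the new node and the images under `succAbove` of the old
pairs other than `(l, l + 1)`. -/
theorem prod_castSucc_succ_eq_mul_succAbove {β : Type*} [CommMonoid β] {k : ℕ}
    (F : Fin (k + 3) → Fin (k + 3) → β) (l : Fin (k + 1)) :
    ∏ i : Fin (k + 2), F i.castSucc i.succ
      = F (l.castSucc.succ.succAbove l.castSucc) l.castSucc.succ
        * F l.castSucc.succ (l.castSucc.succ.succAbove l.succ)
        * ∏ i : Fin k, F (l.castSucc.succ.succAbove (l.succAbove i).castSucc)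
            (l.castSucc.succ.succAbove (l.succAbove i).succ) := by
  rw [prod_univ_succAbove _ l.castSucc, prod_univ_succAbove _ l, succAbove_castSucc_self,
    succAbove_of_castSucc_lt _ _ castSucc_lt_succ,
    succAbove_of_le_castSucc _ _ (succ_castSucc l).le, ← succ_castSucc, mul_assoc]
  congr 2
  refine Finset.prod_congr rfl fun i _ => ?_
  rw [← castSucc_succAbove_castSucc, succ_succAbove_succ,
    succ_succAbove_of_ne (castSucc_injective _ |>.ne (succAbove_ne l i))]

theorem snoc_cons_insertNth {n : ℕ} {α : Type*} (a b : α) (i : Fin (n + 1)) (x : α)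
    (p : Fin n → α) :
    (snoc (cons a (insertNth i x p)) b : Fin (n + 3) → α)
      = insertNth i.castSucc.succ x (snoc (cons a p) b) := by
  rw [succ_castSucc, insertNth_castSucc_snoc, insertNth_succ_cons]

theorem strictMono_snoc_cons {n : ℕ} {α : Type*} [Preorder α] {f : Fin (n + 1) → α}
    (hf : StrictMono f) {a b : α} (ha : a < f 0) (hb : f (last n) < b) :
    StrictMono (snoc (cons a f) b : Fin (n + 3) → α) := by
  rw [← insertNth_zero', ← insertNth_last']
  exact strictMono_insertNth_last (strictMono_insertNth_zero hf a ha) b (by simpa)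

theorem lt_and_lt_of_strictMono_insertNth {n : ℕ} {α : Type*} [Preorder α]
    {f : Fin (n + 1) → α} {i : Fin n} {x : α}
    (h : StrictMono (insertNth i.castSucc.succ x f)) : f i.castSucc < x ∧ x < f i.succ := by
  have hlt := h (castSucc_lt_succ (i := i.castSucc))
  have hgt := h (succ_castSucc i ▸ castSucc_lt_succ (i := i.succ))
  rw [← succAbove_of_castSucc_lt i.castSucc.succ i.castSucc castSucc_lt_succ,
    insertNth_apply_succAbove, insertNth_apply_same] at hlt
  rw [← succAbove_of_le_castSucc _ i.succ (succ_castSucc i).le, insertNth_apply_succAbove,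
    insertNth_apply_same] at hgt
  exact ⟨hlt, hgt⟩

end Fin

theorem Measurable.finInsertNth {X β : Type*} [MeasurableSpace X] [MeasurableSpace β] {n : ℕ}
    {f : X → β} {g : X → Fin n → β} (hf : Measurable f) (i : Fin (n + 1))
    (hg : Measurable g) : Measurable fun a => (i.insertNth (f a) (g a) : Fin (n + 1) → β) :=
  (MeasurableEquiv.piFinSuccAbove (fun _ => β) i).symm.measurable.comp (hf.prodMk hg)

section Chain

variable {M : Type*} (q : ℝ → M → M → ℝ≥0∞)

noncomputable def chainDensity {k : ℕ} (T : Fin (k + 2) → ℝ) (Y : Fin (k + 2) → M) : ℝ≥0∞ :=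
  ∏ i : Fin (k + 1), q (T i.succ - T i.castSucc) (Y i.castSucc) (Y i.succ)

theorem bridgeChain_eq_chainDensity (x₀ y₀ : M) {k : ℕ} (t : Fin k → ℝ) (x : Fin k → M) :
    bridgeChain q x₀ y₀ t x
      = chainDensity q (Fin.snoc (Fin.cons 0 t) 1) (Fin.snoc (Fin.cons x₀ x) y₀) :=
  rfl

theorem chainDensity_eq_mul_prod {k : ℕ} (T : Fin (k + 2) → ℝ) (Y : Fin (k + 2) → M)
    (l : Fin (k + 1)) :
    chainDensity q T Y = q (T l.succ - T l.castSucc) (Y l.castSucc) (Y l.succ)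
      * ∏ i : Fin k, q (T (l.succAbove i).succ - T (l.succAbove i).castSucc)
          (Y (l.succAbove i).castSucc) (Y (l.succAbove i).succ) :=
  Fin.prod_univ_succAbove _ l

theorem chainDensity_insertNth {k : ℕ} (T : Fin (k + 2) → ℝ) (Y : Fin (k + 2) → M)
    (l : Fin (k + 1)) (s : ℝ) (z : M) :
    chainDensity q (Fin.insertNth l.castSucc.succ s T) (Fin.insertNth l.castSucc.succ z Y)
      = q (s - T l.castSucc) (Y l.castSucc) z * q (T l.succ - s) z (Y l.succ)
        * ∏ i : Fin k, q (T (l.succAbove i).succ - T (l.succAbove i).castSucc)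
            (Y (l.succAbove i).castSucc) (Y (l.succAbove i).succ) := by
  let T' : Fin (k + 3) → ℝ := Fin.insertNth l.castSucc.succ s T
  let Y' : Fin (k + 3) → M := Fin.insertNth l.castSucc.succ z Y
  exact (Fin.prod_castSucc_succ_eq_mul_succAbove
    (fun a b => q (T' b - T' a) (Y' a) (Y' b)) l).trans (by
      simp only [T', Y', Fin.insertNth_apply_same, Fin.insertNth_apply_succAbove])

variable [MeasurableSpace M]

theorem measurable_chainDensity (hq : Measurable fun p : ℝ × M × M => q p.1 p.2.1 p.2.2)
    {k : ℕ} (T : Fin (k + 2) → ℝ) : Measurable (chainDensity q T) :=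
  Finset.measurable_prod _ fun i _ =>
    hq.comp (f := fun Y : Fin (k + 2) → M => (T i.succ - T i.castSucc, Y i.castSucc, Y i.succ))
      (by fun_prop)

theorem lintegral_chainDensity_insertNth (μ : Measure M)
    (hq : Measurable fun p : ℝ × M × M => q p.1 p.2.1 p.2.2)
    (hCK : ∀ a b : ℝ, 0 < a → 0 < b → a + b ≤ 1 → ∀ x y : M,
      ∫⁻ z, q a x z * q b z y ∂μ = q (a + b) x y)
    {k : ℕ} (T : Fin (k + 2) → ℝ) (Y : Fin (k + 2) → M) (l : Fin (k + 1)) (s : ℝ)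
    (hmono : StrictMono (Fin.insertNth l.castSucc.succ s T))
    (hspan : T (Fin.last _) - T 0 ≤ 1) :
    ∫⁻ z, chainDensity q (Fin.insertNth l.castSucc.succ s T)
        (Fin.insertNth l.castSucc.succ z Y) ∂μ = chainDensity q T Y := by
  have hT : StrictMono T := by
    simpa only [Function.comp_def, Fin.insertNth_apply_succAbove]
      using hmono.comp (Fin.strictMono_succAbove l.castSucc.succ)
  obtain ⟨h₁, h₂⟩ := Fin.lt_and_lt_of_strictMono_insertNth hmono
  have hle : T l.succ - T l.castSucc ≤ T (Fin.last _) - T 0 :=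
    sub_le_sub (hT.monotone (Fin.le_last _)) (hT.monotone (Fin.zero_le _))
  have hmeas : Measurable fun z => q (s - T l.castSucc) (Y l.castSucc) z
      * q (T l.succ - s) z (Y l.succ) :=
    (hq.comp (measurable_const.prodMk (measurable_const.prodMk measurable_id))).mul
      (hq.comp (measurable_const.prodMk (measurable_id.prodMk measurable_const)))
  simp_rw [chainDensity_insertNth, chainDensity_eq_mul_prod q T Y l]
  rw [lintegral_mul_const _ hmeas, hCK _ _ (sub_pos.2 h₁) (sub_pos.2 h₂) (by linarith),
    sub_add_sub_cancel']

end Chain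

theorem bridge_fdd_consistent_general
    {M : Type*} [MeasurableSpace M] (μ : Measure M)
    (q : ℝ → M → M → ℝ≥0∞)
    (hq_meas : Measurable fun p : ℝ × M × M => q p.1 p.2.1 p.2.2)
    (hCK : ∀ a b : ℝ, 0 < a → 0 < b → a + b ≤ 1 → ∀ x y : M,
      ∫⁻ z, q a x z * q b z y ∂μ = q (a + b) x y)
    (x₀ y₀ : M)
    (n : ℕ) (t : Fin (n + 1) → ℝ)
    (ht_mono : StrictMono t) (ht0 : 0 < t 0) (htn : t (Fin.last n) < 1)
    (j : Fin (n + 1)) (x : Fin n → M) :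
    ∫⁻ z, bridgeFDD q x₀ y₀ t (Fin.insertNth j z x) ∂μ
      = bridgeFDD q x₀ y₀ (fun i => t (j.succAbove i)) x := by
  set T : Fin (n + 2) → ℝ := Fin.snoc (Fin.cons 0 (fun i => t (j.succAbove i))) 1
  set Y : Fin (n + 2) → M := Fin.snoc (Fin.cons x₀ x) y₀
  have hT : (Fin.snoc (Fin.cons 0 t) 1 : Fin (n + 3) → ℝ)
      = Fin.insertNth j.castSucc.succ (t j) T := by
    conv_lhs => rw [← Fin.insertNth_self_removeNth j t]
    exact Fin.snoc_cons_insertNth _ _ _ _ _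
  have hmono : StrictMono (Fin.insertNth j.castSucc.succ (t j) T) :=
    hT ▸ Fin.strictMono_snoc_cons ht_mono ht0 htn
  have hspan : T (Fin.last _) - T 0 ≤ 1 := by simp [T]
  simp only [bridgeFDD, bridgeChain_eq_chainDensity, Fin.snoc_cons_insertNth, hT]
  have hmeas : Measurable fun z =>
      chainDensity q (Fin.insertNth j.castSucc.succ (t j) T) (Fin.insertNth j.castSucc.succ z Y) :=
    (measurable_chainDensity q hq_meas _).comp (measurable_id.finInsertNth _ measurable_const)
  rw [lintegral_const_mul _ hmeas,
    lintegral_chainDensity_insertNth q μ hq_meas hCK T Y j (t j) hmono hspan]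

/-- under the Chapman–Kolmogorov identity, integrating the bridge
finite-dimensional density at times `t₁ < ⋯ < t_{n+1}` over its `j`-th coordinate yields the
bridge finite-dimensional density at the times with `t_j` removed: the bridge
finite-dimensional densities form a consistent (projective) family. -/
theorem bridge_fdd_consistent
    {M : Type*} [MeasurableSpace M] (μ : Measure M) [SigmaFinite μ]
    (q : ℝ → M → M → ℝ≥0∞)
    (hq_meas : Measurable fun p : ℝ × M × M => q p.1 p.2.1 p.2.2)
    (hCK : ∀ a b : ℝ, 0 < a → 0 < b → a + b ≤ 1 → ∀ x y : M,
      ∫⁻ z, q a x z * q b z y ∂μ = q (a + b) x y)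
    (x₀ y₀ : M) (hq₁_pos : 0 < q 1 x₀ y₀) (hq₁_fin : q 1 x₀ y₀ < ⊤)
    (n : ℕ) (t : Fin (n + 1) → ℝ)
    (ht_mono : StrictMono t) (ht0 : 0 < t 0) (htn : t (Fin.last n) < 1)
    (j : Fin (n + 1)) (x : Fin n → M) :
    ∫⁻ z, bridgeFDD q x₀ y₀ t (Fin.insertNth j z x) ∂μ
      = bridgeFDD q x₀ y₀ (fun i => t (j.succAbove i)) x :=
  bridge_fdd_consistent_general μ q hq_meas hCK x₀ y₀ n t ht_mono ht0 htn j x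
end
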